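/- arXiv:2007.12102 — 3 statements merged into one kernel-verified Lean document; each statement's English description precedes it below -/
import Mathlib

section
/- Let G be a graph in which every vertex has degree at most Δ, and let v be a vertex of G. If N_v denotes the number of connected induced k-vertex subgraphs of G containing v, then N_v ≤ (k-1)! · Δ^(k-1). -/
open Finset
set_option linter.unusedSectionVars false

namespace Stmt0Aux

variable {V : Type*} [Fintype V] [DecidableEq V] (G : SimpleGraph V) [DecidableRel G.Adj]

noncomputable def nth (u : V) (i : ℕ) (d : V) : V := (G.neighborFinset u).toList.getD i d

lemma nth_exists {u w : V} (h : G.Adj u w) (d : V) :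
    ∃ i, i < G.degree u ∧ nth G u i d = w := by
  have hw : w ∈ (G.neighborFinset u).toList := by
    simp [h]
  obtain ⟨i, hi, hget⟩ := List.mem_iff_getElem.1 hw
  have hlen : i < G.degree u := by
    simpa [Finset.length_toList] using hi
  exact ⟨i, hlen, by rw [nth, List.getD_eq_getElem _ d hi, hget]⟩

noncomputable def stp (v : V) (l : List V) (c : ℕ × ℕ) : List V := l ++ [nth G (l.getD c.1 v) c.2 v]

noncomputable def build (v : V) (cs : List (ℕ × ℕ)) : List V := cs.foldl (stp G v) [v]

lemma build_append (v : V) (cs : List (ℕ × ℕ)) (c : ℕ × ℕ) :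
    build G v (cs ++ [c]) = stp G v (build G v cs) c := by
  simp [build, List.foldl_append]

/-- crossing walk lemma -/
lemma walk_crossing {S : Set V} (T : Finset V) :
    ∀ {a b : S} (_ : (G.induce S).Walk a b), a.val ∈ T → b.val ∉ T →
      ∃ p ∈ T, ∃ q : V, q ∈ S ∧ q ∉ T ∧ G.Adj p q := by
  intro a b w
  induction w with
  | nil => intro h1 h2; exact absurd h1 h2
  | @cons a c b h p ih =>
      intro h1 h2
      by_cases hc : c.val ∈ T
      · exact ih hc h2
      · exact ⟨a.val, h1, c.val, c.2, hc, h⟩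

lemma exists_crossing (S : Finset V) (hconn : (G.induce (S : Set V)).Connected)
    (T : Finset V) (x : V) (hxT : x ∈ T) (hxS : x ∈ S) (y : V) (hyS : y ∈ S) (hyT : y ∉ T) :
    ∃ p ∈ T, ∃ q : V, q ∈ S ∧ q ∉ T ∧ G.Adj p q := by
  obtain ⟨w⟩ := hconn.preconnected ⟨x, by simpa using hxS⟩ ⟨y, by simpa using hyS⟩
  exact walk_crossing G T w hxT hyT

lemma getD_append_left {α : Type*} (l l' : List α) (d : α) (i : ℕ) (h : i < l.length) :
    (l ++ l').getD i d = l.getD i d := by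
  simp [List.getD_eq_getElem?_getD, List.getElem?_append_left h]

lemma getD_concat_length {α : Type*} (l : List α) (a d : α) :
    (l ++ [a]).getD l.length d = a := by
  simp [List.getD_eq_getElem?_getD, List.getElem?_concat_length]

lemma getD_mem {α : Type*} (l : List α) (d : α) {p : α} (hp : p ∈ l) :
    ∃ j < l.length, l.getD j d = p := by
  obtain ⟨j, hj, hget⟩ := List.mem_iff_getElem.1 hp
  exact ⟨j, hj, by rw [List.getD_eq_getElem _ d hj, hget]⟩

/-- ordering existence -/
lemma exists_ordering_aux (S : Finset V) (v : V)
    (hconn : (G.induce (S : Set V)).Connected) :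
    ∀ n (l : List V), l.Nodup → l ≠ [] → l.getD 0 v = v → (∀ x ∈ l, x ∈ S) →
      (∀ i, 0 < i → i < l.length → ∃ j < i, G.Adj (l.getD j v) (l.getD i v)) →
      S.card = l.length + n →
      ∃ l' : List V, l'.Nodup ∧ l'.toFinset = S ∧ l'.getD 0 v = v ∧ l' ≠ [] ∧
        ∀ i, 0 < i → i < l'.length → ∃ j < i, G.Adj (l'.getD j v) (l'.getD i v) := by
  intro n
  induction n with
  | zero =>
      intro l hnd hne h0 hsub hgood hcard
      refine ⟨l, hnd, ?_, h0, hne, hgood⟩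
      apply Finset.eq_of_subset_of_card_le
      · intro x hx; exact hsub x (List.mem_toFinset.1 hx)
      · rw [List.card_toFinset, hnd.dedup]; omega
  | succ n ih =>
      intro l hnd hne h0 hsub hgood hcard
      have hlpos : 0 < l.length := List.length_pos_iff.2 hne
      have hvl : v ∈ l := by
        have : l.getD 0 v ∈ l := by
          rw [List.getD_eq_getElem _ v hlpos]
          exact List.getElem_mem _
        rwa [h0] at this
      have hTS : l.toFinset ⊆ S := fun x hx => hsub x (List.mem_toFinset.1 hx)
      have hlt : l.toFinset.card < S.card := by
        rw [List.card_toFinset, hnd.dedup]; omega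
      have hss : l.toFinset ⊂ S :=
        hTS.ssubset_of_ne (fun h => by rw [h] at hlt; omega)
      obtain ⟨y, hyS, hyT⟩ := Finset.exists_of_ssubset hss
      obtain ⟨p, hpT, q, hqS, hqT, hpq⟩ := exists_crossing G S hconn l.toFinset v
        (List.mem_toFinset.2 hvl) (hsub v hvl) y hyS hyT
      have hql : q ∉ l := fun h => hqT (List.mem_toFinset.2 h)
      obtain ⟨j, hj, hjp⟩ := getD_mem l v (List.mem_toFinset.1 hpT)
      have hlen : (l ++ [q]).length = l.length + 1 := by simp
      refine ih (l ++ [q]) (hnd.append (List.nodup_singleton q) (fun a ha hb => by rw [List.mem_singleton] at hb; subst hb; exact hql ha)) (by exact List.append_ne_nil_of_right_ne_nil l (by simp)) ?_ ?_ ?_ ?_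
      · rw [getD_append_left _ _ _ _ hlpos]; exact h0
      · intro x hx
        rcases List.mem_append.1 hx with h | h
        · exact hsub x h
        · rw [List.mem_singleton] at h; subst h; exact hqS
      · intro i hi hilen
        rw [hlen] at hilen
        rcases Nat.lt_or_ge i l.length with hcase | hcase
        · obtain ⟨j', hj', hadj⟩ := hgood i hi hcase
          refine ⟨j', hj', ?_⟩
          rw [getD_append_left _ _ _ _ (by omega), getD_append_left _ _ _ _ hcase]
          exact hadj
        · have hieq : i = l.length := by omega
          refine ⟨j, by omega, ?_⟩
          rw [getD_append_left _ _ _ _ hj, hjp, hieq, getD_concat_length]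
          exact hpq
      · rw [hlen]; omega

lemma exists_ordering (S : Finset V) (v : V) (hv : v ∈ S) (hS : 1 ≤ S.card)
    (hconn : (G.induce (S : Set V)).Connected) :
    ∃ l : List V, l.Nodup ∧ l.toFinset = S ∧ l.getD 0 v = v ∧ l ≠ [] ∧
      ∀ i, 0 < i → i < l.length → ∃ j < i, G.Adj (l.getD j v) (l.getD i v) := by
  refine exists_ordering_aux G S v hconn (S.card - 1) [v] (by simp) (by simp) (by simp)
    (by simpa using hv) (by intro i h1 h2; simp at h2; omega) (by simp; omega)

lemma getD_take {α : Type*} (l : List α) (d : α) {j m : ℕ} (hj : j < m) :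
    (l.take m).getD j d = l.getD j d := by
  simp [List.getD_eq_getElem?_getD, List.getElem?_take, hj]

lemma build_prefix (Δ : ℕ) (v : V) (l : List V) (hΔ : ∀ u, G.degree u ≤ Δ)
    (h0 : l.getD 0 v = v) (hne : l ≠ [])
    (hgood : ∀ i, 0 < i → i < l.length → ∃ j < i, G.Adj (l.getD j v) (l.getD i v)) :
    ∀ n, n < l.length → ∃ cs : List (ℕ × ℕ), cs.length = n ∧
      (∀ m < n, (cs.getD m (0,0)).1 ≤ m ∧ (cs.getD m (0,0)).2 < Δ) ∧
      build G v cs = l.take (n+1) := by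
  intro n
  induction n with
  | zero =>
      intro hn
      refine ⟨[], rfl, by omega, ?_⟩
      rw [build, List.foldl_nil, List.take_succ, List.take_zero, List.getElem?_eq_getElem hn]
      rw [List.getD_eq_getElem _ v hn] at h0
      simp [h0]
  | succ n ih =>
      intro hn
      obtain ⟨cs, hlen, hval, hbuild⟩ := ih (by omega)
      obtain ⟨j, hj, hadj⟩ := hgood (n+1) (by omega) hn
      obtain ⟨i, hideg, hnth⟩ := nth_exists G hadj v
      refine ⟨cs ++ [(j, i)], by simp [hlen], ?_, ?_⟩
      · intro m hm
        rcases Nat.lt_or_ge m n with hc | hc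
        · rw [getD_append_left _ _ _ _ (by omega)]; exact hval m hc
        · have : m = n := by omega
          subst this
          rw [← hlen, getD_concat_length]
          exact ⟨by omega, lt_of_lt_of_le hideg (hΔ _)⟩
      · rw [build_append, hbuild, stp]
        rw [getD_take _ _ (by omega), hnth]
        rw [List.getD_eq_getElem _ v hn]
        have htake : List.take (n+1+1) l = List.take (n+1) l ++ [l[n+1]] := by
          rw [List.take_succ, List.getElem?_eq_getElem hn]; simp
        rw [htake]

abbrev Code (n Δ : ℕ) := (i : Fin n) → Fin (i + 1) × Fin Δ

lemma card_code (n Δ : ℕ) : Fintype.card (Code n Δ) = n.factorial * Δ ^ n := by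
  rw [Fintype.card_pi]
  simp only [Fintype.card_prod, Fintype.card_fin]
  rw [Finset.prod_mul_distrib, Finset.prod_const, Finset.card_univ, Fintype.card_fin]
  congr 1
  exact (Fin.prod_univ_eq_prod_range (fun i => i + 1) n).trans
    (Finset.prod_range_add_one_eq_factorial n)

def toListCode {n Δ : ℕ} (c : Code n Δ) : List (ℕ × ℕ) :=
  List.ofFn fun i => ((c i).1.val, (c i).2.val)

lemma code_of_valid {n Δ : ℕ} (cs : List (ℕ × ℕ)) (hlen : cs.length = n)
    (hval : ∀ m < n, (cs.getD m (0,0)).1 ≤ m ∧ (cs.getD m (0,0)).2 < Δ) :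
    ∃ c : Code n Δ, toListCode c = cs := by
  refine ⟨fun i => (⟨(cs.getD i (0,0)).1, by have := (hval i i.2).1; omega⟩,
    ⟨(cs.getD i (0,0)).2, (hval i i.2).2⟩), ?_⟩
  apply List.ext_getElem
  · simp [toListCode, hlen]
  · intro m h1 h2
    simp only [toListCode, List.getElem_ofFn]
    rw [List.getD_eq_getElem _ (0,0) h2]

end Stmt0Aux

/-- if every vertex of `G` has degree at most `Δ`, then the number of
connected induced `k`-vertex subgraphs of `G` containing a fixed vertex `v` is at most
`(k-1)! * Δ^(k-1)`. -/
theorem stmt0 {V : Type*} [Fintype V] [DecidableEq V]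
    (G : SimpleGraph V) [DecidableRel G.Adj] (k Δ : ℕ) (hk : 1 ≤ k) (v : V)
    (hΔ : ∀ u, G.degree u ≤ Δ) :
    {S : Finset V | v ∈ S ∧ S.card = k ∧ (G.induce (S : Set V)).Connected}.ncard
      ≤ (k - 1).factorial * Δ ^ (k - 1) := by
  classical
  have hsub : {S : Finset V | v ∈ S ∧ S.card = k ∧ (G.induce (S : Set V)).Connected} ⊆
      ↑((Finset.univ : Finset (Stmt0Aux.Code (k-1) Δ)).image
        fun c => (Stmt0Aux.build G v (Stmt0Aux.toListCode c)).toFinset) := by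
    intro S hS
    obtain ⟨hvS, hcard, hconn⟩ := hS
    obtain ⟨l, hnd, hto, h0, hne, hgood⟩ :=
      Stmt0Aux.exists_ordering G S v hvS (by omega) hconn
    have hlenl : l.length = k := by
      have h := List.card_toFinset l
      rw [hto, hnd.dedup] at h; omega
    obtain ⟨cs, hcslen, hcsval, hbuild⟩ :=
      Stmt0Aux.build_prefix G Δ v l hΔ h0 hne hgood (k-1) (by omega)
    have hbl : Stmt0Aux.build G v cs = l := by
      rw [hbuild]
      have hkk : k - 1 + 1 = k := by omega
      rw [hkk, ← hlenl, List.take_length]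
    obtain ⟨c, hc⟩ := Stmt0Aux.code_of_valid cs hcslen hcsval
    simp only [Finset.coe_image, Finset.coe_univ, Set.image_univ, Set.mem_range]
    exact ⟨c, by rw [hc, hbl, hto]⟩
  calc {S : Finset V | v ∈ S ∧ S.card = k ∧ (G.induce (S : Set V)).Connected}.ncard
      ≤ ((Finset.univ.image fun c =>
          (Stmt0Aux.build G v (Stmt0Aux.toListCode c)).toFinset) : Finset (Finset V)).card := by
        rw [← Set.ncard_coe_finset]
        exact Set.ncard_le_ncard hsub (Set.toFinite _)
    _ ≤ Fintype.card (Stmt0Aux.Code (k-1) Δ) := by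
        rw [← Finset.card_univ]; exact Finset.card_image_le
    _ = _ := Stmt0Aux.card_code _ _
end

section
/- Let X be a finite ergodic reversible Markov chain with spectral gap γ, and let A be a nonempty proper subset of its state space. The collapsed chain X* obtained by merging the complement of A into a single state a (with transitions weighted by the stationary distribution) satisfies γ(X*) ≥ γ(X). -/
/-!
A function `g` on the collapsed state space pulls back along the collapsing map
`p : V → A ⊕ Unit` to `g ∘ p` on `V`. Since the collapsed stationary distribution is the
pushforward of `π` and `π* x P*(x, y)` is the `π`-weighted flow of `P` from the fibre of `x` to
the fibre of `y`, the pullback preserves both the variance and the Dirichlet form. Hence every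
Rayleigh quotient of the collapsed chain is one of the original chain, and the infimum can only
grow.
-/

open Finset

/-- Dirichlet form `ℰ_{P,π}(f) = (1/2) Σ_{x,y} (f x - f y)^2 π x P x y`. -/
noncomputable def dirichletForm {V : Type*} [Fintype V] (P : Matrix V V ℝ) (π f : V → ℝ) : ℝ :=
  (1 / 2) * ∑ x, ∑ y, (f x - f y) ^ 2 * (π x * P x y)

/-- Variance of `f` under `π`. -/
noncomputable def piVar {V : Type*} [Fintype V] (π f : V → ℝ) : ℝ :=
  ∑ x, π x * (f x - ∑ y, π y * f y) ^ 2

/-- Spectral gap of a reversible chain, via the variational characterization. -/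
noncomputable def spectralGap {V : Type*} [Fintype V] (P : Matrix V V ℝ) (π : V → ℝ) : ℝ :=
  sInf {r : ℝ | ∃ f : V → ℝ, piVar π f ≠ 0 ∧ r = dirichletForm P π f / piVar π f}

/-- The transition matrix of the chain collapsed with respect to `A`: the states
outside `A` are merged into the single extra state `Sum.inr ()`. -/
noncomputable def collapsedP {V : Type*} [Fintype V] (P : Matrix V V ℝ) (π : V → ℝ)
    (A : Set V) [DecidablePred (· ∈ A)] : Matrix (↥A ⊕ Unit) (↥A ⊕ Unit) ℝ :=
  fun x y => match x, y with
  | Sum.inl u, Sum.inl v => P u v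
  | Sum.inl u, Sum.inr _ => ∑ v ∈ Finset.univ.filter (fun v => v ∉ A), P u v
  | Sum.inr _, Sum.inl v =>
      (∑ u ∈ Finset.univ.filter (fun u => u ∉ A), π u * P u v)
        / ∑ u ∈ Finset.univ.filter (fun u => u ∉ A), π u
  | Sum.inr _, Sum.inr _ =>
      (∑ u ∈ Finset.univ.filter (fun u => u ∉ A),
          ∑ v ∈ Finset.univ.filter (fun v => v ∉ A), π u * P u v)
        / ∑ u ∈ Finset.univ.filter (fun u => u ∉ A), π u

/-- The stationary distribution of the collapsed chain. -/
noncomputable def collapsedPi {V : Type*} [Fintype V] (π : V → ℝ)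
    (A : Set V) [DecidablePred (· ∈ A)] : (↥A ⊕ Unit) → ℝ :=
  fun x => match x with
  | Sum.inl u => π u
  | Sum.inr _ => ∑ u ∈ Finset.univ.filter (fun u => u ∉ A), π u

def rayleighQuotients {V : Type*} [Fintype V] (P : Matrix V V ℝ) (π : V → ℝ) : Set ℝ :=
  {r | ∃ f : V → ℝ, piVar π f ≠ 0 ∧ r = dirichletForm P π f / piVar π f}

section RayleighQuotients

variable {V : Type*} [Fintype V] {P : Matrix V V ℝ} {π : V → ℝ}

theorem spectralGap_eq_sInf : spectralGap P π = sInf (rayleighQuotients P π) := rfl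

theorem dirichletForm_nonneg (hπ : ∀ x, 0 ≤ π x) (hP : ∀ x y, 0 ≤ P x y) (f : V → ℝ) :
    0 ≤ dirichletForm P π f :=
  mul_nonneg (by norm_num) <| sum_nonneg fun x _ => sum_nonneg fun y _ =>
    mul_nonneg (sq_nonneg _) (mul_nonneg (hπ x) (hP x y))

theorem piVar_nonneg (hπ : ∀ x, 0 ≤ π x) (f : V → ℝ) : 0 ≤ piVar π f :=
  sum_nonneg fun x _ => mul_nonneg (hπ x) (sq_nonneg _)

theorem piVar_ne_zero_of_apply_ne (hπ : ∀ x, 0 < π x) {f : V → ℝ} {x y : V} (hxy : f x ≠ f y) :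
    piVar π f ≠ 0 := by
  intro hvar
  have hconst : ∀ z, f z = ∑ w, π w * f w := by
    intro z
    have hz := (sum_eq_zero_iff_of_nonneg fun w _ => mul_nonneg (hπ w).le (sq_nonneg _)).mp
      hvar z (mem_univ z)
    rw [mul_eq_zero, sq_eq_zero_iff, sub_eq_zero] at hz
    exact hz.resolve_left (hπ z).ne'
  exact hxy ((hconst x).trans (hconst y).symm)

theorem bddBelow_rayleighQuotients (hπ : ∀ x, 0 ≤ π x) (hP : ∀ x y, 0 ≤ P x y) :
    BddBelow (rayleighQuotients P π) := by
  refine ⟨0, ?_⟩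
  rintro r ⟨f, -, rfl⟩
  exact div_nonneg (dirichletForm_nonneg hπ hP f) (piVar_nonneg hπ f)

end RayleighQuotients

section Pushforward

variable {V W : Type*} [Fintype V] [Fintype W] [DecidableEq W] (p : V → W)

theorem sum_mul_sum_fiber (F : W → ℝ) (a : V → ℝ) :
    ∑ x, F x * ∑ u with p u = x, a u = ∑ u, F (p u) * a u := by
  simp_rw [mul_sum]
  rw [← sum_fiberwise univ p]
  exact sum_congr rfl fun x _ => sum_congr rfl fun u hu => by rw [(mem_filter.1 hu).2]

theorem sum_sum_mul_sum_sum_fiber (F : W → W → ℝ) (c : V → V → ℝ) :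
    ∑ x, ∑ y, F x y * ∑ u with p u = x, ∑ v with p v = y, c u v =
      ∑ u, ∑ v, F (p u) (p v) * c u v := calc
  _ = ∑ x, ∑ u with p u = x, ∑ y, F (p u) y * ∑ v with p v = y, c u v := by
    refine sum_congr rfl fun x _ => ?_
    simp_rw [mul_sum]
    rw [sum_comm]
    exact sum_congr rfl fun u hu => by rw [(mem_filter.1 hu).2]
  _ = ∑ u, ∑ y, F (p u) y * ∑ v with p v = y, c u v := sum_fiberwise univ p _
  _ = _ := sum_congr rfl fun u _ => sum_mul_sum_fiber p (F (p u)) (c u)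

theorem piVar_comp {π : V → ℝ} {ρ : W → ℝ} (hρ : ∀ x, ρ x = ∑ u with p u = x, π u)
    (g : W → ℝ) : piVar ρ g = piVar π (g ∘ p) := by
  have hsum (F : W → ℝ) : ∑ x, ρ x * F x = ∑ u, π u * F (p u) := by
    simp_rw [hρ, mul_comm _ (F _)]
    exact sum_mul_sum_fiber p F π
  unfold piVar
  rw [hsum g]
  exact hsum _

theorem dirichletForm_comp {P : Matrix V V ℝ} {π : V → ℝ} {Q : Matrix W W ℝ} {ρ : W → ℝ}
    (hflow : ∀ x y, ρ x * Q x y = ∑ u with p u = x, ∑ v with p v = y, π u * P u v)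
    (g : W → ℝ) : dirichletForm Q ρ g = dirichletForm P π (g ∘ p) := by
  unfold dirichletForm
  simp_rw [hflow]
  rw [sum_sum_mul_sum_sum_fiber p (fun x y => (g x - g y) ^ 2)]
  rfl

theorem rayleighQuotients_subset_of_comp {P : Matrix V V ℝ} {π : V → ℝ} {Q : Matrix W W ℝ}
    {ρ : W → ℝ} (hρ : ∀ x, ρ x = ∑ u with p u = x, π u)
    (hflow : ∀ x y, ρ x * Q x y = ∑ u with p u = x, ∑ v with p v = y, π u * P u v) :
    rayleighQuotients Q ρ ⊆ rayleighQuotients P π := by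
  rintro r ⟨g, hg, rfl⟩
  refine ⟨g ∘ p, ?_, ?_⟩
  · rwa [← piVar_comp p hρ]
  · rw [piVar_comp p hρ, dirichletForm_comp p hflow]

end Pushforward

section Collapse

variable {V : Type*} (A : Set V) [DecidablePred (· ∈ A)]

def collapse (v : V) : ↥A ⊕ Unit :=
  if h : v ∈ A then .inl ⟨v, h⟩ else .inr ()

theorem collapse_apply_of_mem {v : V} (hv : v ∈ A) : collapse A v = .inl ⟨v, hv⟩ := dif_pos hv

theorem collapse_apply_of_notMem {v : V} (hv : v ∉ A) : collapse A v = .inr () := dif_neg hv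

variable [Fintype V]

theorem sum_compl_pos {π : V → ℝ} (hπ : ∀ x, 0 < π x) (hA : A ≠ Set.univ) :
    0 < ∑ u with u ∉ A, π u := by
  obtain ⟨w, hw⟩ := (Set.ne_univ_iff_exists_notMem A).mp hA
  exact sum_pos' (fun u _ => (hπ u).le) ⟨w, mem_filter.mpr ⟨mem_univ w, hw⟩, hπ w⟩

theorem collapsedPi_pos {π : V → ℝ} (hπ : ∀ x, 0 < π x) (hA : A ≠ Set.univ) (x : ↥A ⊕ Unit) :
    0 < collapsedPi π A x := by
  rcases x with u | _
  · exact hπ u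
  · exact sum_compl_pos A hπ hA

theorem rayleighQuotients_collapsedP_nonempty (P : Matrix V V ℝ) {π : V → ℝ}
    (hπ : ∀ x, 0 < π x) (hA : A.Nonempty) (hAne : A ≠ Set.univ) :
    (rayleighQuotients (collapsedP P π A) (collapsedPi π A)).Nonempty := by
  obtain ⟨a, ha⟩ := hA
  exact ⟨_, Sum.elim 0 1, piVar_ne_zero_of_apply_ne (collapsedPi_pos A hπ hAne)
    (x := .inl ⟨a, ha⟩) (y := .inr ()) (by simp), rfl⟩

variable [DecidableEq V]

theorem filter_collapse_eq_inl (u : A) : univ.filter (collapse A · = .inl u) = {u.val} := by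
  ext v
  simp only [mem_filter, mem_univ, true_and, mem_singleton]
  by_cases hv : v ∈ A
  · simp [collapse_apply_of_mem A hv, Subtype.ext_iff]
  · rw [collapse_apply_of_notMem A hv]
    exact iff_of_false Sum.inr_ne_inl fun h => hv (h ▸ u.2)

theorem filter_collapse_eq_inr (t : Unit) :
    univ.filter (collapse A · = .inr t) = univ.filter (· ∉ A) := by
  ext v
  simp only [mem_filter, mem_univ, true_and]
  by_cases hv : v ∈ A
  · simp [collapse_apply_of_mem A hv, hv]
  · simp [collapse_apply_of_notMem A hv, hv]

theorem collapsedPi_eq_sum_fiber (π : V → ℝ) (x : ↥A ⊕ Unit) :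
    collapsedPi π A x = ∑ u with collapse A u = x, π u := by
  rcases x with u | t
  · simp [filter_collapse_eq_inl, collapsedPi]
  · rw [filter_collapse_eq_inr]
    rfl

theorem collapsedPi_mul_collapsedP (P : Matrix V V ℝ) {π : V → ℝ}
    (hA : ∑ u with u ∉ A, π u ≠ 0) (x y : ↥A ⊕ Unit) :
    collapsedPi π A x * collapsedP P π A x y =
      ∑ u with collapse A u = x, ∑ v with collapse A v = y, π u * P u v := by
  rcases x with u | t <;> rcases y with v | t' <;>
    simp only [filter_collapse_eq_inl, filter_collapse_eq_inr, sum_singleton, collapsedPi,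
      collapsedP, mul_sum, mul_div_cancel₀ _ hA]

end Collapse

theorem stmt14_general {V : Type*} [Fintype V]
    (P : Matrix V V ℝ) (π : V → ℝ)
    (hπpos : ∀ x, 0 < π x)
    (hP0 : ∀ x y, 0 ≤ P x y)
    (A : Set V) [DecidablePred (· ∈ A)] (hA : A.Nonempty) (hAne : A ≠ Set.univ) :
    spectralGap P π ≤ spectralGap (collapsedP P π A) (collapsedPi π A) := by
  classical
  rw [spectralGap_eq_sInf, spectralGap_eq_sInf]
  exact csInf_le_csInf (bddBelow_rayleighQuotients (fun x => (hπpos x).le) hP0)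
    (rayleighQuotients_collapsedP_nonempty A P hπpos hA hAne)
    (rayleighQuotients_subset_of_comp (collapse A) (collapsedPi_eq_sum_fiber A π)
      (collapsedPi_mul_collapsedP A P (sum_compl_pos A hπpos hAne).ne'))

/-- Aldous–Fill Corollary 3.27: collapsing the complement of a nonempty
proper subset `A` of the state space of a finite ergodic reversible chain does not decrease
the spectral gap. -/
theorem stmt14 {V : Type*} [Fintype V] [DecidableEq V]
    (P : Matrix V V ℝ) (π : V → ℝ)
    (hπpos : ∀ x, 0 < π x) (hπ1 : ∑ x, π x = 1)
    (hP0 : ∀ x y, 0 ≤ P x y) (hP1 : ∀ x, ∑ y, P x y = 1)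
    (hrev : ∀ x y, π x * P x y = π y * P y x)
    (hergodic : ∀ x y : V, ∃ n : ℕ, 0 < (P ^ n) x y)
    (A : Set V) [DecidablePred (· ∈ A)] (hA : A.Nonempty) (hAne : A ≠ Set.univ) :
    spectralGap P π ≤ spectralGap (collapsedP P π A) (collapsedPi π A) :=
  stmt14_general P π hπpos hP0 A hA hAne
end

section
/- Let X_P and X_Q be {0,1}-valued random variables defined on a common probability space, and let S_P, S_Q be random variables with values in a common finite set, with distributions D_P of (S_P, X_P) and D_Q of (S_Q, X_Q). Suppose Pr(X_P = 1) ≥ c > 0. Then the total variation distance between the conditional distributions D_P(· | X_P = 1) and D_Q(· | X_Q = 1) satisfies TV ≤ (Pr(S_P ≠ S_Q) + 2·Pr(X_P ≠ X_Q)) / Pr(max(X_P,X_Q)=1). -/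
lemma stmt17_helper {S : Type*} [Fintype S] [DecidableEq S] (p q : S) (a b : ℝ) :
    ∑ s : S, |(if p = s then a else 0) - (if q = s then b else 0)|
      = if p = q then |a - b| else |a| + |b| := by
  by_cases h : p = q
  · subst h
    simp only [if_pos rfl]
    have : ∀ s : S, |(if p = s then a else 0) - (if p = s then b else 0)|
        = if p = s then |a - b| else 0 := by
      intro s; by_cases hs : p = s <;> simp [hs]
    rw [Finset.sum_congr rfl fun s _ => this s]
    simp
  · rw [if_neg h]
    have : ∀ s : S, |(if p = s then a else 0) - (if q = s then b else 0)|
        = (if p = s then |a| else 0) + (if q = s then |b| else 0) := by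
      intro s
      by_cases h1 : p = s <;> by_cases h2 : q = s <;>
        simp [h1, h2, abs_sub_comm]
      exact absurd (h1.trans h2.symm) h
    rw [Finset.sum_congr rfl fun s _ => this s]
    rw [Finset.sum_add_distrib]
    simp

lemma stmt17_aux {S : Type*} [Fintype S] (P Q V DS DX : ℝ) (A B : S → ℝ)
    (hP : 0 < P) (hQ : 0 < Q) (hPV : P ≤ V) (hVle : V ≤ P + DX)
    (hA0 : ∀ s, 0 ≤ A s) (hB0 : ∀ s, 0 ≤ B s)
    (hAsum : ∑ s, A s = P) (hBsum : ∑ s, B s = Q)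
    (hAB : ∑ s, |A s - B s| ≤ 2 * DS + DX)
    (hPQ : |P - Q| ≤ DX) (hDS : 0 ≤ DS) (hDX : 0 ≤ DX) :
    (1 / 2) * ∑ s, |A s / P - B s / Q| ≤ (DS + 2 * DX) / V := by
  have hV : 0 < V := lt_of_lt_of_le hP hPV
  have h1 : ∑ s, |A s / P - B s / Q| ≤ 2 := by
    have h : ∀ s, |A s / P - B s / Q| ≤ A s / P + B s / Q := by
      intro s
      refine (abs_sub _ _).trans ?_
      rw [abs_of_nonneg (div_nonneg (hA0 s) hP.le), abs_of_nonneg (div_nonneg (hB0 s) hQ.le)]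
    refine (Finset.sum_le_sum fun s _ => h s).trans ?_
    rw [Finset.sum_add_distrib, ← Finset.sum_div, ← Finset.sum_div, hAsum, hBsum,
      div_self hP.ne', div_self hQ.ne']
    norm_num
  have h2 : ∑ s, |A s / P - B s / Q| ≤ (2 * DS + 2 * DX) / P := by
    have step : ∀ s : S, |A s / P - B s / Q| ≤ |A s - B s| / P + B s * |Q - P| / (P * Q) := by
      intro s
      have e : A s / P - B s / Q = (A s - B s) / P + B s * (Q - P) / (P * Q) := by
        field_simp; ring
      rw [e]
      refine (abs_add_le _ _).trans (le_of_eq ?_)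
      rw [abs_div, abs_div, abs_mul, abs_of_pos hP, abs_of_nonneg (hB0 s),
        abs_of_pos (mul_pos hP hQ)]
    refine (Finset.sum_le_sum fun s _ => step s).trans ?_
    rw [Finset.sum_add_distrib, ← Finset.sum_div, ← Finset.sum_div, ← Finset.sum_mul, hBsum]
    have e2 : Q * |Q - P| / (P * Q) = |Q - P| / P := by
      rw [mul_comm P Q, mul_div_mul_left _ _ hQ.ne']
    rw [e2]
    have hQP : |Q - P| ≤ DX := by rwa [abs_sub_comm]
    rw [← add_div]
    exact (div_le_div_iff_of_pos_right hP).2 (by linarith)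
  by_cases hcase : V ≤ DS + 2 * DX
  · have hge : (1:ℝ) ≤ (DS + 2 * DX) / V := (one_le_div hV).2 hcase
    nlinarith [h1]
  · push_neg at hcase
    have hlt : DS + DX < P := by linarith
    have key : (DS + DX) * V ≤ (DS + 2 * DX) * P := by
      nlinarith [mul_le_mul_of_nonneg_left hVle (add_nonneg hDS hDX),
        mul_le_mul_of_nonneg_right hlt.le hDX]
    calc (1/2) * ∑ s, |A s / P - B s / Q| ≤ (1/2) * ((2 * DS + 2 * DX) / P) := by linarith
    _ = (DS + DX) / P := by ring
    _ ≤ (DS + 2 * DX) / V := (div_le_div_iff₀ hP hV).2 key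

/-- a coupling bound for conditional (accepted-sample) distributions.
On a common finite probability space `(Θ, μ)`, given acceptance indicators `XP, XQ` and
sample values `SP, SQ`, with `Pr(XP = 1) ≥ c > 0`, the total variation distance between
the laws of `SP` given `XP = 1` and of `SQ` given `XQ = 1` is at most
`(Pr(SP ≠ SQ) + 2 Pr(XP ≠ XQ)) / Pr(XP = 1 ∨ XQ = 1)`. -/
theorem stmt17 {Θ S : Type*} [Fintype Θ] [Fintype S] [DecidableEq S]
    (μ : Θ → ℝ) (hμ0 : ∀ θ, 0 ≤ μ θ) (hμ1 : ∑ θ, μ θ = 1)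
    (XP XQ : Θ → Bool) (SP SQ : Θ → S)
    (c : ℝ) (hc : 0 < c)
    (hP : c ≤ ∑ θ, if XP θ = true then μ θ else 0)
    (hQpos : 0 < ∑ θ, if XQ θ = true then μ θ else 0) :
    (1 / 2) * ∑ s : S,
      |(∑ θ, if SP θ = s ∧ XP θ = true then μ θ else 0)
          / (∑ θ, if XP θ = true then μ θ else 0)
        - (∑ θ, if SQ θ = s ∧ XQ θ = true then μ θ else 0)
          / (∑ θ, if XQ θ = true then μ θ else 0)|
      ≤ ((∑ θ, if SP θ ≠ SQ θ then μ θ else 0)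
          + 2 * ∑ θ, if XP θ ≠ XQ θ then μ θ else 0)
        / (∑ θ, if XP θ = true ∨ XQ θ = true then μ θ else 0) := by
  classical
  set P : ℝ := ∑ θ, if XP θ = true then μ θ else 0 with hPdef
  set Q : ℝ := ∑ θ, if XQ θ = true then μ θ else 0 with hQdef
  set V : ℝ := ∑ θ, if XP θ = true ∨ XQ θ = true then μ θ else 0 with hVdef
  set DS : ℝ := ∑ θ, if SP θ ≠ SQ θ then μ θ else 0 with hDSdef
  set DX : ℝ := ∑ θ, if XP θ ≠ XQ θ then μ θ else 0 with hDXdef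
  have hP0 : 0 < P := lt_of_lt_of_le hc hP
  have hDS0 : 0 ≤ DS := Finset.sum_nonneg fun θ _ => by split_ifs with h; exacts [hμ0 θ, le_rfl]
  have hDX0 : 0 ≤ DX := Finset.sum_nonneg fun θ _ => by split_ifs with h; exacts [hμ0 θ, le_rfl]
  have hPV : P ≤ V := Finset.sum_le_sum fun θ _ => by
    cases h1 : XP θ <;> cases h2 : XQ θ <;> simp [h1, h2, hμ0 θ]
  have hVle : V ≤ P + DX := by
    rw [hPdef, hDXdef, ← Finset.sum_add_distrib]
    refine Finset.sum_le_sum fun θ _ => ?_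
    cases h1 : XP θ <;> cases h2 : XQ θ <;> simp [h1, h2, hμ0 θ]
  have hA0 : ∀ s : S, 0 ≤ ∑ θ, if SP θ = s ∧ XP θ = true then μ θ else 0 := fun s =>
    Finset.sum_nonneg fun θ _ => by split_ifs with h; exacts [hμ0 θ, le_rfl]
  have hB0 : ∀ s : S, 0 ≤ ∑ θ, if SQ θ = s ∧ XQ θ = true then μ θ else 0 := fun s =>
    Finset.sum_nonneg fun θ _ => by split_ifs with h; exacts [hμ0 θ, le_rfl]
  have hAsum : ∑ s : S, (∑ θ, if SP θ = s ∧ XP θ = true then μ θ else 0) = P := by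
    rw [Finset.sum_comm]
    refine Finset.sum_congr rfl fun θ _ => ?_
    by_cases h : XP θ = true <;> simp [h]
  have hBsum : ∑ s : S, (∑ θ, if SQ θ = s ∧ XQ θ = true then μ θ else 0) = Q := by
    rw [Finset.sum_comm]
    refine Finset.sum_congr rfl fun θ _ => ?_
    by_cases h : XQ θ = true <;> simp [h]
  have hPQ : |P - Q| ≤ DX := by
    rw [hPdef, hQdef, hDXdef, ← Finset.sum_sub_distrib]
    refine (Finset.abs_sum_le_sum_abs _ _).trans (Finset.sum_le_sum fun θ _ => ?_)
    cases h1 : XP θ <;> cases h2 : XQ θ <;> simp [h1, h2, hμ0 θ, abs_of_nonneg (hμ0 θ)]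
  have hAB : ∑ s : S, |(∑ θ, if SP θ = s ∧ XP θ = true then μ θ else 0)
      - (∑ θ, if SQ θ = s ∧ XQ θ = true then μ θ else 0)| ≤ 2 * DS + DX := by
    have step1 : ∀ s : S, |(∑ θ, if SP θ = s ∧ XP θ = true then μ θ else 0)
        - (∑ θ, if SQ θ = s ∧ XQ θ = true then μ θ else 0)|
        ≤ ∑ θ, |(if SP θ = s ∧ XP θ = true then μ θ else 0)
            - (if SQ θ = s ∧ XQ θ = true then μ θ else 0)| := by
      intro s
      rw [← Finset.sum_sub_distrib]
      exact Finset.abs_sum_le_sum_abs _ _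
    refine (Finset.sum_le_sum fun s _ => step1 s).trans ?_
    rw [Finset.sum_comm]
    have perθ : ∀ θ : Θ, ∑ s : S, |(if SP θ = s ∧ XP θ = true then μ θ else 0)
        - (if SQ θ = s ∧ XQ θ = true then μ θ else 0)|
        ≤ 2 * (if SP θ ≠ SQ θ then μ θ else 0) + (if XP θ ≠ XQ θ then μ θ else 0) := by
      intro θ
      have e : ∀ s : S, |(if SP θ = s ∧ XP θ = true then μ θ else 0)
          - (if SQ θ = s ∧ XQ θ = true then μ θ else 0)|
          = |(if SP θ = s then (if XP θ = true then μ θ else 0) else 0)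
            - (if SQ θ = s then (if XQ θ = true then μ θ else 0) else 0)| := by
        intro s
        by_cases h1 : SP θ = s <;> by_cases h2 : SQ θ = s <;> simp [h1, h2]
      rw [Finset.sum_congr rfl fun s _ => e s, stmt17_helper]
      cases h1 : XP θ <;> cases h2 : XQ θ <;> by_cases hs : SP θ = SQ θ <;>
        simp [h1, h2, hs, abs_of_nonneg (hμ0 θ)] <;> linarith [hμ0 θ]
    refine (Finset.sum_le_sum fun θ _ => perθ θ).trans ?_
    rw [Finset.sum_add_distrib, ← Finset.mul_sum]
  exact stmt17_aux P Q V DS DX _ _ hP0 hQpos hPV hVle hA0 hB0 hAsum hBsum hAB hPQ hDS0 hDX0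
end
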